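/- Fix d = 8 and define, for positive reals (x₁, x₂, x₃), the functions rᵢ(x₁,x₂,x₃) = (d·xᵢ² − d·xⱼ² − d·xₖ² + (10d−8)·xⱼ·xₖ)/(2·x₁·x₂·x₃) for {i,j,k} = {1,2,3}. Let s satisfy 0 < s < (693 + 11√2737 − 7√(22(511 + 9√2737)))/616 and set r = √(1 + (77/4)s²) − (1 − (9/2)s). Then at the point (x₁, x₂, x₃) = (1, 1+r, s), the quantity −2·Σᵢ rᵢ·xᵢ·(∂r₁/∂xᵢ) is strictly negative. -/

import Mathlib

set_option maxHeartbeats 1000000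

/-- Coefficient r₁ of the Ricci tensor of the homogeneous metric (x₁,x₂,x₃). -/
noncomputable def ric1 (d x₁ x₂ x₃ : ℝ) : ℝ :=
  (d*x₁^2 - d*x₂^2 - d*x₃^2 + (10*d-8)*x₂*x₃)/(2*x₁*x₂*x₃)

/-- Coefficient r₂ of the Ricci tensor of the homogeneous metric (x₁,x₂,x₃). -/
noncomputable def ric2 (d x₁ x₂ x₃ : ℝ) : ℝ :=
  (d*x₂^2 - d*x₁^2 - d*x₃^2 + (10*d-8)*x₁*x₃)/(2*x₁*x₂*x₃)

/-- Coefficient r₃ of the Ricci tensor of the homogeneous metric (x₁,x₂,x₃). -/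
noncomputable def ric3 (d x₁ x₂ x₃ : ℝ) : ℝ :=
  (d*x₃^2 - d*x₁^2 - d*x₂^2 + (10*d-8)*x₁*x₂)/(2*x₁*x₂*x₃)

lemma deriv_aux (p q k c x : ℝ) (hc : c ≠ 0) (hx : x ≠ 0) :
    HasDerivAt (fun y => (p*y^2 + q*y + k)/(c*y)) ((p*x^2 - k)/(c*x^2)) x := by
  have h1 : HasDerivAt (fun y : ℝ => p*y^2 + q*y + k) (2*p*x + q) x := by
    have h := (((hasDerivAt_pow 2 x).const_mul p).add ((hasDerivAt_id x).const_mul q)).add_const k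
    refine h.congr_deriv ?_
    push_cast
    ring
  have h2 : HasDerivAt (fun y : ℝ => c*y) c x := by
    simpa using (hasDerivAt_id x).const_mul c
  have h3 := h1.div h2 (mul_ne_zero hc hx)
  have heq : ((2*p*x + q) * (c*x) - (p*x^2 + q*x + k) * c)/((c*x)^2)
      = (p*x^2 - k)/(c*x^2) := by
    field_simp
    ring
  exact heq ▸ h3

/-- For d = 8 (F₄/Spin(8)): at the boundary point (1, 1+r, s) with
r = √(1+(77/4)s²) − (1−(9/2)s) and 0 < s < (693+11√2737−7√(22(511+9√2737)))/616, the derivative of r₁ along the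
Ricci flow, −2·Σᵢ rᵢ·xᵢ·(∂r₁/∂xᵢ), is strictly negative. -/
theorem stmt_14 (s : ℝ) (hs0 : 0 < s) (hs1 : s < (693 + 11*Real.sqrt 2737 - 7*Real.sqrt (22*(511 + 9*Real.sqrt 2737)))/616)
    (r x₁ x₂ x₃ : ℝ) (hr : r = Real.sqrt (1 + (77/4)*s^2) - (1 - (9/2)*s))
    (hx1 : x₁ = 1) (hx2 : x₂ = 1 + r) (hx3 : x₃ = s) :
    -2 * (ric1 8 x₁ x₂ x₃ * x₁ * deriv (fun y => ric1 8 y x₂ x₃) x₁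
        + ric2 8 x₁ x₂ x₃ * x₂ * deriv (fun y => ric1 8 x₁ y x₃) x₂
        + ric3 8 x₁ x₂ x₃ * x₃ * deriv (fun y => ric1 8 x₁ x₂ y) x₃) < 0 := by
  subst hx1
  rw [hx3]
  set a := Real.sqrt 2737 with ha_def
  have ha0 : 0 ≤ a := Real.sqrt_nonneg _
  have ha2 : a^2 = 2737 := Real.sq_sqrt (by norm_num)
  have haL : 52.316 < a := by nlinarith [ha2, ha0]
  have haU : a < 52.317 := by nlinarith [ha2, ha0]
  set b := Real.sqrt (22*(511 + 9*a)) with hb_def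
  have hb0 : 0 ≤ b := Real.sqrt_nonneg _
  have hb2 : b^2 = 22*(511 + 9*a) := Real.sq_sqrt (by nlinarith)
  have hbL : 146.96 < b := by nlinarith [hb2, hb0, haL]
  have hs39 : s < 0.39 := by
    have : (693 + 11*a - 7*b)/616 < 0.39 := by nlinarith [haU, hbL]
    linarith
  set t := Real.sqrt (1 + (77/4)*s^2) with ht_def
  have ht0 : 0 < t := Real.sqrt_pos.2 (by positivity)
  have ht2 : t^2 = 1 + (77/4)*s^2 := Real.sq_sqrt (by positivity)
  have hu : x₂ = t + (9/2)*s := by rw [hx2, hr]; ring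
  have hu0 : 0 < x₂ := by rw [hu]; positivity
  have hid : x₂^2 - 9*x₂*s + s^2 = 1 := by rw [hu]; linear_combination ht2
  -- key quadratic facts
  have hFm : 0 < 616*s^2 - (1386 + 22*a)*s + (423 + 9*a) := by
    have h1 : 0 < (693 + 11*a - 7*b)/616 - s := by linarith
    have h2 : 0 < (693 + 11*a + 7*b)/616 - s := by linarith
    nlinarith [mul_pos h1 h2, ha2, hb2]
  have hFp : 616*s^2 - (1386 - 22*a)*s + (423 - 9*a) < 0 := by
    nlinarith [mul_pos hs0 (show (0:ℝ) < 0.39 - s by linarith), haL, haU]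
  have hprod : (616*s^2 - (1386 + 22*a)*s + (423 + 9*a)) * (616*s^2 - (1386 - 22*a)*s + (423 - 9*a))
      = (616*s^2 - 1386*s + 423)^2 - 2737*(22*s - 9)^2 := by
    linear_combination (-(22*s-9)^2) * ha2
  have hq : (616*s^2 - 1386*s + 423)^2 - 2737*(22*s - 9)^2 < 0 := by
    nlinarith [mul_pos hFm (neg_pos.2 hFp), hprod]
  have hP : (1386*s^2 - 693*s + 72)^2 < (126 - 308*s)^2*(1 + (77/4)*s^2) := by
    nlinarith [hq]
  have hpow : (1386*s^2 - 693*s + 72)^2 < ((126 - 308*s)*t)^2 := by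
    calc (1386*s^2 - 693*s + 72)^2 < (126 - 308*s)^2*(1 + (77/4)*s^2) := hP
    _ = ((126 - 308*s)*t)^2 := by rw [mul_pow, ht2]
  have hG : 1386*s^2 - 693*s + 72 < (126 - 308*s)*t := by
    have hL0 : 0 ≤ (126 - 308*s)*t := mul_nonneg (by linarith) ht0.le
    exact lt_of_pow_lt_pow_left₀ 2 hL0 hpow
  have key : 0 < 63*(x₂ + s) - 154*x₂*s - 36 := by
    rw [hu]; nlinarith [hG]
  -- nonvanishing
  have hx2ne : x₂ ≠ 0 := ne_of_gt hu0
  have hsne : s ≠ 0 := ne_of_gt hs0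
  -- derivatives
  have hD1 : deriv (fun y => ric1 8 y x₂ s) 1
      = (8*(1:ℝ)^2 - (-8*x₂^2 - 8*s^2 + 72*x₂*s))/((2*x₂*s)*1^2) := by
    have hfe : (fun y => ric1 8 y x₂ s)
        = (fun y => (8*y^2 + 0*y + (-8*x₂^2 - 8*s^2 + 72*x₂*s))/((2*x₂*s)*y)) := by
      funext y; simp only [ric1]; ring
    rw [hfe]
    exact (deriv_aux 8 0 _ _ 1 (by positivity) one_ne_zero).deriv
  have hD2 : deriv (fun y => ric1 8 1 y s) x₂
      = (-8*x₂^2 - (8 - 8*s^2))/((2*s)*x₂^2) := by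
    have hfe : (fun y => ric1 8 1 y s)
        = (fun y => (-8*y^2 + (72*s)*y + (8 - 8*s^2))/((2*s)*y)) := by
      funext y; simp only [ric1]; ring
    rw [hfe]
    exact (deriv_aux (-8) (72*s) _ _ x₂ (by positivity) hx2ne).deriv
  have hD3 : deriv (fun y => ric1 8 1 x₂ y) s
      = (-8*s^2 - (8 - 8*x₂^2))/((2*x₂)*s^2) := by
    have hfe : (fun y => ric1 8 1 x₂ y)
        = (fun y => (-8*y^2 + (72*x₂)*y + (8 - 8*x₂^2))/((2*x₂)*y)) := by
      funext y; simp only [ric1]; ring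
    rw [hfe]
    exact (deriv_aux (-8) (72*x₂) _ _ s (by positivity) hsne).deriv
  have hric1 : ric1 8 1 x₂ s = 0 := by
    simp only [ric1]
    have hnum : (8:ℝ)*1^2 - 8*x₂^2 - 8*s^2 + (10*8-8)*x₂*s = 0 := by
      linear_combination (-8) * hid
    rw [hnum, zero_div]
  rw [hD1, hD2, hD3, hric1]
  have hsum : ric2 8 1 x₂ s * x₂ * ((-8*x₂^2 - (8 - 8*s^2))/((2*s)*x₂^2))
      + ric3 8 1 x₂ s * s * ((-8*s^2 - (8 - 8*x₂^2))/((2*x₂)*s^2))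
      = ((8*x₂^2 - 8 - 8*s^2 + 72*s)*(-8*x₂^2 - 8 + 8*s^2)
        + (8*s^2 - 8 - 8*x₂^2 + 72*x₂)*(8*x₂^2 - 8 - 8*s^2))/(4*x₂^2*s^2) := by
    simp only [ric2, ric3]
    field_simp
    ring
  have hnum : (8*x₂^2 - 8 - 8*s^2 + 72*s)*(-8*x₂^2 - 8 + 8*s^2)
        + (8*s^2 - 8 - 8*x₂^2 + 72*x₂)*(8*x₂^2 - 8 - 8*s^2)
      = 64*s*x₂*(63*(x₂ + s) - 154*x₂*s - 36) := by
    linear_combination (-128*x₂^2 - 1152*x₂*s + 576*x₂ - 128*s^2 + 576*s - 128) * hid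
  have hpos : 0 < ric2 8 1 x₂ s * x₂ * ((-8*x₂^2 - (8 - 8*s^2))/((2*s)*x₂^2))
      + ric3 8 1 x₂ s * s * ((-8*s^2 - (8 - 8*x₂^2))/((2*x₂)*s^2)) := by
    rw [hsum, hnum]
    apply div_pos
    · exact mul_pos (by positivity) key
    · positivity
  nlinarith [hpos]
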